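/- arXiv:1309.3829 — 6 statements merged into one kernel-verified Lean document; each statement's English description precedes it below -/
import Mathlib

section
/- If (F_n) is a nonincreasing sequence of closed subsets of Ω with ⋂_{n=1}^∞ F_n = F, then c(F_n) decreases to c(F); that is, inf_{n} c(F_n) = c(F). -/
/-!
By the portmanteau theorem `P ↦ P(F)` is upper semicontinuous in the weak topology whenever `F`
is closed. A Dini-type argument then applies: if `P(⋂ Fₙ) < t` for every `P` in the compact set,
the open sets `{P | P(Fₙ) < t}` increase and cover it, so one of them contains it.
-/

open MeasureTheory Filter Set

theorem IsCompact.iInf_biSup_eq_biSup_iInf {α ι β : Type*} [TopologicalSpace α]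
    [Preorder ι] [IsDirectedOrder ι] [Nonempty ι] [CompleteLinearOrder β] [DenselyOrdered β]
    {K : Set α} (hK : IsCompact K) {f : ι → α → β} (hf : ∀ i, UpperSemicontinuous (f i))
    (hanti : Antitone f) :
    ⨅ i, ⨆ x ∈ K, f i x = ⨆ x ∈ K, ⨅ i, f i x := by
  refine le_antisymm (le_of_forall_gt_imp_ge_of_dense fun t ht => ?_)
    (le_iInf fun i => iSup₂_mono fun x _ => iInf_le _ i)
  have hcover : K ⊆ ⋃ i, f i ⁻¹' Iio t := fun x hx =>
    mem_iUnion.2 (iInf_lt_iff.1 ((le_biSup _ hx).trans_lt ht))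
  have hmono : Monotone fun i => f i ⁻¹' Iio t := fun i j hij _ hx => (hanti hij _).trans_lt hx
  obtain ⟨i, hi⟩ := hK.elim_directed_cover _ (fun i => (hf i).isOpen_preimage t) hcover
    hmono.directed_le
  exact iInf_le_of_le i (iSup₂_le fun x hx => (hi hx).le)

theorem MeasureTheory.ProbabilityMeasure.upperSemicontinuous_measure_of_isClosed
    {Ω : Type*} [MeasurableSpace Ω] [TopologicalSpace Ω] [OpensMeasurableSpace Ω]
    [HasOuterApproxClosed Ω] {F : Set Ω} (hF : IsClosed F) :
    UpperSemicontinuous fun P : ProbabilityMeasure Ω => (P : Measure Ω) F :=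
  upperSemicontinuous_iff_limsup_le.2 fun _ => limsup_measure_closed_le_of_tendsto tendsto_id hF

theorem upperCapacity_continuous_from_above_closed_general
    {Ω : Type*} [TopologicalSpace Ω] [PolishSpace Ω] [MeasurableSpace Ω] [BorelSpace Ω]
    (Ps : Set (ProbabilityMeasure Ω)) (hcompact : IsCompact Ps)
    (F : ℕ → Set Ω) (hclosed : ∀ n, IsClosed (F n)) (hanti : Antitone F)
    (S : Set Ω) (hS : (⋂ n, F n) = S) :
    (⨅ n, ⨆ P ∈ Ps, (P : Measure Ω) (F n)) = ⨆ P ∈ Ps, (P : Measure Ω) S := by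
  subst hS
  have hmeasure (P : ProbabilityMeasure Ω) :
      (P : Measure Ω) (⋂ n, F n) = ⨅ n, (P : Measure Ω) (F n) :=
    hanti.measure_iInter (fun n => (hclosed n).measurableSet.nullMeasurableSet)
      ⟨0, measure_ne_top _ _⟩
  simp_rw [hmeasure]
  exact hcompact.iInf_biSup_eq_biSup_iInf
    (fun n => ProbabilityMeasure.upperSemicontinuous_measure_of_isClosed (hclosed n))
    (fun _ _ hmn _ => measure_mono (hanti hmn))

/-- Continuity from above on closed sets of the upper capacity associated with a
nonempty weakly compact set of Borel probability measures on a Polish space: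
if `F n` are closed and `F n ↓ F`, then `c(F n) ↓ c(F)`, i.e. `⨅ n, c (F n) = c F`. -/
theorem upperCapacity_continuous_from_above_closed
    {Ω : Type*} [TopologicalSpace Ω] [PolishSpace Ω] [MeasurableSpace Ω] [BorelSpace Ω]
    (Ps : Set (ProbabilityMeasure Ω)) (hne : Ps.Nonempty) (hcompact : IsCompact Ps)
    (F : ℕ → Set Ω) (hclosed : ∀ n, IsClosed (F n)) (hanti : Antitone F)
    (S : Set Ω) (hS : (⋂ n, F n) = S) :
    (⨅ n, ⨆ P ∈ Ps, (P : Measure Ω) (F n)) = ⨆ P ∈ Ps, (P : Measure Ω) S :=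
  upperCapacity_continuous_from_above_closed_general Ps hcompact F hclosed hanti S hS
end

section
/- Let (X_n) and X be real-valued measurable functions on Ω such that X_n converges to X in capacity, i.e., for every ε > 0, c({ω : |X_n(ω) − X(ω)| ≥ ε}) → 0 as n → ∞. Then there exists a strictly increasing sequence of indices (n_k) such that X_{n_k} converges to X quasi-surely, i.e., c({ω : X_{n_k}(ω) does not converge to X(ω) as k → ∞}) = 0. -/
open MeasureTheory Filter
open scoped ENNReal Topology

/-!
Choose `n_k` so that the set where `X (n_k)` is `2⁻ᵏ`-far from `Y` has capacity below `2⁻ᵏ`.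
Off the limsup of these sets the subsequence converges, and the first Borel–Cantelli lemma,
applied to each `P ∈ Ps` with the same summable bound `∑ 2⁻ᵏ`, makes that limsup polar.
-/

section UpperCapacity

variable {Ω : Type*} [MeasurableSpace Ω]

noncomputable def upperCapacity (Ps : Set (Measure Ω)) (s : Set Ω) : ℝ≥0∞ :=
  ⨆ P ∈ Ps, P s

variable {Ps : Set (Measure Ω)}

theorem measure_le_upperCapacity {P : Measure Ω} (hP : P ∈ Ps) (s : Set Ω) :
    P s ≤ upperCapacity Ps s :=
  le_iSup₂_of_le P hP le_rfl

theorem upperCapacity_mono {s t : Set Ω} (hst : s ⊆ t) :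
    upperCapacity Ps s ≤ upperCapacity Ps t :=
  iSup₂_mono fun _ _ => measure_mono hst

theorem upperCapacity_limsup_atTop_eq_zero {s : ℕ → Set Ω}
    (hs : ∑' n, upperCapacity Ps (s n) ≠ ∞) :
    upperCapacity Ps (limsup s atTop) = 0 :=
  le_antisymm (iSup₂_le fun _ hP => (measure_limsup_atTop_eq_zero <|
    ne_top_of_le_ne_top hs (ENNReal.tsum_le_tsum fun n => measure_le_upperCapacity hP (s n))).le)
    zero_le

end UpperCapacity

theorem setOf_not_tendsto_subset_limsup {Ω E : Type*} [PseudoMetricSpace E]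
    {f : ℕ → Ω → E} {g : Ω → E} {δ : ℕ → ℝ} (hδ : Tendsto δ atTop (𝓝 0)) :
    {ω | ¬Tendsto (fun k => f k ω) atTop (𝓝 (g ω))} ⊆
      limsup (fun k => {ω | δ k ≤ dist (f k ω) (g ω)}) atTop := by
  intro ω hω
  by_contra hlimsup
  have hclose : ∀ᶠ k in atTop, dist (f k ω) (g ω) < δ k := by
    simpa [mem_limsup_iff_frequently_mem, not_frequently] using hlimsup
  exact hω <| tendsto_iff_dist_tendsto_zero.2 <|
    squeeze_zero' (.of_forall fun _ => dist_nonneg) (hclose.mono fun _ => le_of_lt) hδ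

theorem exists_strictMono_upperCapacity_lt_of_tendsto_in_capacity {Ω E : Type*}
    [MeasurableSpace Ω] [PseudoMetricSpace E] {Ps : Set (Measure Ω)}
    {f : ℕ → Ω → E} {g : Ω → E}
    (hfg : ∀ ε : ℝ, 0 < ε →
      Tendsto (fun n => upperCapacity Ps {ω | ε ≤ dist (f n ω) (g ω)}) atTop (𝓝 0)) :
    ∃ φ : ℕ → ℕ, StrictMono φ ∧ ∀ k,
      upperCapacity Ps {ω | (2⁻¹ : ℝ) ^ k ≤ dist (f (φ k) ω) (g ω)} < 2⁻¹ ^ k :=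
  extraction_forall_of_eventually fun k =>
    (hfg _ (by positivity)).eventually_lt_const (ENNReal.pow_pos (by norm_num) k)

theorem exists_subseq_tendsto_upperCapacity_eq_zero_of_tendsto_in_capacity {Ω E : Type*}
    [MeasurableSpace Ω] [PseudoMetricSpace E] {Ps : Set (Measure Ω)}
    {f : ℕ → Ω → E} {g : Ω → E}
    (hfg : ∀ ε : ℝ, 0 < ε →
      Tendsto (fun n => upperCapacity Ps {ω | ε ≤ dist (f n ω) (g ω)}) atTop (𝓝 0)) :
    ∃ φ : ℕ → ℕ, StrictMono φ ∧
      upperCapacity Ps {ω | ¬Tendsto (fun k => f (φ k) ω) atTop (𝓝 (g ω))} = 0 := by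
  obtain ⟨φ, hφ, hsmall⟩ := exists_strictMono_upperCapacity_lt_of_tendsto_in_capacity hfg
  have hsum : ∑' k, upperCapacity Ps {ω | (2⁻¹ : ℝ) ^ k ≤ dist (f (φ k) ω) (g ω)} ≠ ∞ :=
    ne_top_of_le_ne_top (by simp [ENNReal.tsum_geometric, ENNReal.one_sub_inv_two])
      (ENNReal.tsum_le_tsum fun k => (hsmall k).le)
  refine ⟨φ, hφ, le_antisymm ?_ zero_le⟩
  calc upperCapacity Ps {ω | ¬Tendsto (fun k => f (φ k) ω) atTop (𝓝 (g ω))}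
      ≤ upperCapacity Ps (limsup (fun k => {ω | (2⁻¹ : ℝ) ^ k ≤ dist (f (φ k) ω) (g ω)}) atTop) :=
        upperCapacity_mono <| setOf_not_tendsto_subset_limsup <|
          tendsto_pow_atTop_nhds_zero_of_lt_one (by norm_num) (by norm_num)
    _ = 0 := upperCapacity_limsup_atTop_eq_zero hsum

theorem exists_subseq_tendsto_qs_of_tendsto_in_capacity_general
    {Ω : Type*} [MeasurableSpace Ω]
    (Ps : Set (Measure Ω))
    (X : ℕ → Ω → ℝ) (Y : Ω → ℝ)
    (h : ∀ ε : ℝ, 0 < ε →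
      Tendsto (fun n => ⨆ P ∈ Ps, P {ω | ε ≤ |X n ω - Y ω|}) atTop (nhds 0)) :
    ∃ φ : ℕ → ℕ, StrictMono φ ∧
      (⨆ P ∈ Ps, P {ω | ¬ Tendsto (fun k => X (φ k) ω) atTop (nhds (Y ω))}) = 0 :=
  exists_subseq_tendsto_upperCapacity_eq_zero_of_tendsto_in_capacity <| by
    simpa only [upperCapacity, Real.dist_eq] using h

/-- If `X n` converges to `Y` in capacity, then some subsequence converges
quasi-surely, i.e. outside a polar set. -/
theorem exists_subseq_tendsto_qs_of_tendsto_in_capacity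
    {Ω : Type*} [MeasurableSpace Ω]
    (Ps : Set (Measure Ω)) (hne : Ps.Nonempty)
    (hprob : ∀ P ∈ Ps, IsProbabilityMeasure P)
    (X : ℕ → Ω → ℝ) (Y : Ω → ℝ)
    (hX : ∀ n, Measurable (X n)) (hY : Measurable Y)
    (h : ∀ ε : ℝ, 0 < ε →
      Tendsto (fun n => ⨆ P ∈ Ps, P {ω | ε ≤ |X n ω - Y ω|}) atTop (nhds 0)) :
    ∃ φ : ℕ → ℕ, StrictMono φ ∧
      (⨆ P ∈ Ps, P {ω | ¬ Tendsto (fun k => X (φ k) ω) atTop (nhds (Y ω))}) = 0 :=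
  exists_subseq_tendsto_qs_of_tendsto_in_capacity_general Ps X Y h
end

section
/- Let (f_n) be a sequence of continuous functions f_n : Ω → ℝ with |f_n| ≤ C for all n for some constant C, such that f_{n+1}(ω) ≤ f_n(ω) for all n and ω, and let f(ω) = inf_n f_n(ω) be the pointwise (Borel measurable) limit. Then sup_{P ∈ 𝒫} ∫ f_n dP decreases to sup_{P ∈ 𝒫} ∫ f dP as n → ∞; that is, inf_n sup_{P ∈ 𝒫} ∫ f_n dP = sup_{P ∈ 𝒫} ∫ f dP. -/
/-!
The inequality `⨆ P, ∫ g dP ≤ ⨅ n, ⨆ P, ∫ f n dP` is immediate from `g ≤ f n`. Conversely, let `s`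
be the left-hand side. As `P ↦ ∫ f n dP` is weakly continuous, its supremum over the compact `𝒫` is
attained, so the closed sets `{P ∈ 𝒫 | s ≤ ∫ f n dP}` are nonempty; they decrease in `n`, so some
`P ∈ 𝒫` lies in all of them, and dominated convergence gives `s ≤ ∫ g dP`.
-/

open MeasureTheory Filter Topology

theorem IsCompact.exists_forall_le_of_antitone {X ι β : Type*} [TopologicalSpace X]
    [Preorder ι] [IsDirectedOrder ι] [Nonempty ι] [LinearOrder β] {K : Set X} (hK : IsCompact K)
    {φ : ι → X → β} (hφ : ∀ i, UpperSemicontinuous (φ i)) (hanti : Antitone φ) {s : β}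
    (hs : ∀ i, ∃ x ∈ K, s ≤ φ i x) : ∃ x ∈ K, ∀ i, s ≤ φ i x := by
  by_contra! h
  obtain ⟨i, hi⟩ := hK.elim_directed_family_closed (fun i => φ i ⁻¹' Set.Ici s)
    (fun i => (hφ i).isClosed_preimage s)
    (Set.eq_empty_iff_forall_notMem.2 fun x ⟨hxK, hx⟩ =>
      let ⟨i, hi⟩ := h x hxK
      hi.not_ge (Set.mem_iInter.1 hx i))
    (Antitone.directed_ge fun i j hij x (hx : s ≤ φ j x) => hx.trans (hanti hij x))
  obtain ⟨x, hxK, hx⟩ := hs i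
  exact hi.subset ⟨hxK, hx⟩

lemma bddBelow_range_of_abs_le {ι : Type*} {a : ι → ℝ} {C : ℝ} (h : ∀ i, |a i| ≤ C) :
    BddBelow (Set.range a) :=
  ⟨-C, by rintro _ ⟨i, rfl⟩; exact neg_le_of_abs_le (h i)⟩

lemma abs_ciInf_le {ι : Type*} [Nonempty ι] {a : ι → ℝ} {C : ℝ} (h : ∀ i, |a i| ≤ C) :
    |⨅ i, a i| ≤ C :=
  abs_le.2 ⟨le_ciInf fun i => neg_le_of_abs_le (h i),
    (ciInf_le (bddBelow_range_of_abs_le h) (Classical.arbitrary ι)).trans (le_of_abs_le (h _))⟩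

section UpperExpectation

variable {Ω : Type*} [MeasurableSpace Ω]

noncomputable def upperExpectation (Ps : Set (ProbabilityMeasure Ω)) (f : Ω → ℝ) : ℝ :=
  ⨆ P : Ps, ∫ ω, f ω ∂(P : Measure Ω)

variable {Ps : Set (ProbabilityMeasure Ω)} {f g : Ω → ℝ} {C : ℝ}

lemma abs_integral_le_of_abs_le {μ : Measure Ω} [IsProbabilityMeasure μ] (hf : ∀ ω, |f ω| ≤ C) :
    |∫ ω, f ω ∂μ| ≤ C := by
  simpa using norm_integral_le_of_norm_le_const (μ := μ) (f := f)
    (Eventually.of_forall fun ω => (Real.norm_eq_abs (f ω)).trans_le (hf ω))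

lemma ProbabilityMeasure.continuous_integral_of_abs_le [TopologicalSpace Ω]
    [OpensMeasurableSpace Ω] (hf : Continuous f) (hfC : ∀ ω, |f ω| ≤ C) :
    Continuous fun P : ProbabilityMeasure Ω => ∫ ω, f ω ∂(P : Measure Ω) :=
  ProbabilityMeasure.continuous_integral_boundedContinuousFunction
    (.ofNormedAddCommGroup f hf C fun ω => by simpa using hfC ω)

lemma integrable_of_abs_le {μ : Measure Ω} [IsFiniteMeasure μ] (hfm : Measurable f)
    (hfC : ∀ ω, |f ω| ≤ C) : Integrable f μ :=
  .of_bound hfm.aestronglyMeasurable C (Eventually.of_forall hfC)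

lemma bddAbove_range_integral (hf : ∀ ω, |f ω| ≤ C) :
    BddAbove (Set.range fun P : Ps => ∫ ω, f ω ∂((P : ProbabilityMeasure Ω) : Measure Ω)) :=
  ⟨C, by rintro _ ⟨P, rfl⟩; exact le_of_abs_le (abs_integral_le_of_abs_le hf)⟩

lemma integral_le_upperExpectation (hf : ∀ ω, |f ω| ≤ C) {P : ProbabilityMeasure Ω}
    (hP : P ∈ Ps) : ∫ ω, f ω ∂(P : Measure Ω) ≤ upperExpectation Ps f :=
  le_ciSup (bddAbove_range_integral hf) (⟨P, hP⟩ : Ps)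

lemma neg_le_upperExpectation (hne : Ps.Nonempty) (hf : ∀ ω, |f ω| ≤ C) :
    -C ≤ upperExpectation Ps f :=
  let ⟨P, hP⟩ := hne
  (neg_le_of_abs_le (abs_integral_le_of_abs_le (μ := P) hf)).trans
    (integral_le_upperExpectation hf hP)

lemma upperExpectation_mono (hfm : Measurable f) (hfC : ∀ ω, |f ω| ≤ C) (hgm : Measurable g)
    (hgC : ∀ ω, |g ω| ≤ C) (hfg : f ≤ g) : upperExpectation Ps f ≤ upperExpectation Ps g :=
  ciSup_mono (bddAbove_range_integral hgC) fun _ =>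
    integral_mono (integrable_of_abs_le hfm hfC) (integrable_of_abs_le hgm hgC) hfg

lemma exists_upperExpectation_le_integral [TopologicalSpace Ω] [OpensMeasurableSpace Ω]
    (hne : Ps.Nonempty) (hK : IsCompact Ps) (hf : Continuous f) (hfC : ∀ ω, |f ω| ≤ C) :
    ∃ P ∈ Ps, upperExpectation Ps f ≤ ∫ ω, f ω ∂(P : Measure Ω) := by
  obtain ⟨P, hP, hmax⟩ :=
    hK.exists_isMaxOn hne (ProbabilityMeasure.continuous_integral_of_abs_le hf hfC).continuousOn
  have := hne.to_subtype
  exact ⟨P, hP, ciSup_le fun Q => hmax Q.2⟩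

end UpperExpectation

lemma tendsto_integral_iInf_of_antitone {Ω : Type*} [MeasurableSpace Ω] {μ : Measure Ω}
    [IsFiniteMeasure μ] {f : ℕ → Ω → ℝ} (hfm : ∀ n, Measurable (f n)) {C : ℝ}
    (hfC : ∀ n ω, |f n ω| ≤ C) (hanti : Antitone f) :
    Tendsto (fun n => ∫ ω, f n ω ∂μ) atTop (𝓝 (∫ ω, ⨅ n, f n ω ∂μ)) :=
  tendsto_integral_of_dominated_convergence (fun _ => C) (fun n => (hfm n).aestronglyMeasurable)
    (integrable_const C) (fun n => Eventually.of_forall (hfC n)) <| Eventually.of_forall fun ω =>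
      tendsto_atTop_ciInf (fun _ _ hmn => hanti hmn ω) (bddBelow_range_of_abs_le (hfC · ω))

theorem iInf_upperExpectation_of_decreasing_continuous_general
    {Ω : Type*} [TopologicalSpace Ω] [MeasurableSpace Ω] [BorelSpace Ω]
    (Ps : Set (ProbabilityMeasure Ω)) (hne : Ps.Nonempty) (hcompact : IsCompact Ps)
    (f : ℕ → Ω → ℝ) (hcont : ∀ n, Continuous (f n))
    (C : ℝ) (hbdd : ∀ n ω, |f n ω| ≤ C)
    (hdec : ∀ n ω, f (n + 1) ω ≤ f n ω)
    (g : Ω → ℝ) (hg : ∀ ω, g ω = ⨅ n, f n ω) :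
    (⨅ n, ⨆ P : Ps, ∫ ω, f n ω ∂((P : ProbabilityMeasure Ω) : Measure Ω))
      = ⨆ P : Ps, ∫ ω, g ω ∂((P : ProbabilityMeasure Ω) : Measure Ω) := by
  obtain rfl : g = fun ω => ⨅ n, f n ω := funext hg
  change ⨅ n, upperExpectation Ps (f n) = upperExpectation Ps fun ω => ⨅ n, f n ω
  have hanti : Antitone f := antitone_nat_of_succ_le fun n ω => hdec n ω
  have hfm n : Measurable (f n) := (hcont n).measurable
  have hgC ω : |⨅ n, f n ω| ≤ C := abs_ciInf_le (hbdd · ω)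
  apply le_antisymm
  · set s := ⨅ n, upperExpectation Ps (f n)
    have hs n : ∃ P ∈ Ps, s ≤ ∫ ω, f n ω ∂(P : Measure Ω) := by
      obtain ⟨P, hP, hle⟩ := exists_upperExpectation_le_integral hne hcompact (hcont n) (hbdd n)
      have hbelow : BddBelow (Set.range fun m => upperExpectation Ps (f m)) :=
        ⟨-C, by rintro _ ⟨m, rfl⟩; exact neg_le_upperExpectation hne (hbdd m)⟩
      exact ⟨P, hP, (ciInf_le hbelow n).trans hle⟩
    have hint_anti : Antitone fun n (P : ProbabilityMeasure Ω) => ∫ ω, f n ω ∂(P : Measure Ω) :=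
      fun m n hmn P => integral_mono (integrable_of_abs_le (hfm n) (hbdd n))
        (integrable_of_abs_le (hfm m) (hbdd m)) (hanti hmn)
    obtain ⟨P, hP, hPs⟩ := hcompact.exists_forall_le_of_antitone (fun n =>
      (ProbabilityMeasure.continuous_integral_of_abs_le (hcont n) (hbdd n)).upperSemicontinuous)
      hint_anti hs
    exact (ge_of_tendsto' (tendsto_integral_iInf_of_antitone hfm hbdd hanti) hPs).trans
      (integral_le_upperExpectation hgC hP)
  · refine le_ciInf fun n => upperExpectation_mono (.iInf hfm) hgC (hfm n) (hbdd n) fun ω => ?_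
    exact ciInf_le (bddBelow_range_of_abs_le (hbdd · ω)) n

/-- For a nonempty weakly compact set of Borel probability measures on a Polish
space, the upper expectation of a uniformly bounded, pointwise nonincreasing
sequence of continuous functions decreases to the upper expectation of the
pointwise limit. -/
theorem iInf_upperExpectation_of_decreasing_continuous
    {Ω : Type*} [TopologicalSpace Ω] [PolishSpace Ω] [MeasurableSpace Ω] [BorelSpace Ω]
    (Ps : Set (ProbabilityMeasure Ω)) (hne : Ps.Nonempty) (hcompact : IsCompact Ps)
    (f : ℕ → Ω → ℝ) (hcont : ∀ n, Continuous (f n))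
    (C : ℝ) (hbdd : ∀ n ω, |f n ω| ≤ C)
    (hdec : ∀ n ω, f (n + 1) ω ≤ f n ω)
    (g : Ω → ℝ) (hg : ∀ ω, g ω = ⨅ n, f n ω) :
    (⨅ n, ⨆ P : Ps, ∫ ω, f n ω ∂((P : ProbabilityMeasure Ω) : Measure Ω))
      = ⨆ P : Ps, ∫ ω, g ω ∂((P : ProbabilityMeasure Ω) : Measure Ω) :=
  iInf_upperExpectation_of_decreasing_continuous_general Ps hne hcompact f hcont C hbdd hdec g hg
end

section
/- Suppose 𝒫 ⊆ 𝒫' and sup_{P ∈ 𝒫'} ∫ f dP = sup_{P ∈ 𝒫} ∫ f dP for every bounded continuous function f : Ω → ℝ. Then for every Borel set A ⊆ Ω, sup_{P ∈ 𝒫'} P(A) = sup_{P ∈ 𝒫} P(A); i.e., the two capacities coincide on all Borel sets. -/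
open MeasureTheory

/-!
For a closed set `F`, the thickened indicators `f n` of `F` with radius `1 / (n + 1)` decrease
to `1_F`, so `P F = ⨅ n, ∫ f n dP`. Each `P ↦ ∫ f n dP` is weakly continuous, and on the compact
family `Ps` a Dini-type argument exchanges `⨅ n` with `⨆ P ∈ Ps`. Hence
`⨆ P ∈ Ps', P F ≤ ⨅ n, ⨆ P ∈ Ps', ∫ f n dP = ⨅ n, ⨆ P ∈ Ps, ∫ f n dP = ⨆ P ∈ Ps, P F`.
Borel sets follow because probability measures on a metrizable space are inner regular
with respect to closed sets.
-/

open Set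
open scoped NNReal ENNReal BoundedContinuousFunction

theorem IsCompact.iInf_iSup_eq_iSup_iInf_of_antitone {X α : Type*} [TopologicalSpace X]
    [CompleteLinearOrder α] {K : Set X} (hK : IsCompact K) {G : ℕ → X → α}
    (hG : ∀ n, UpperSemicontinuous (G n)) (hG_anti : Antitone G) :
    ⨅ n, ⨆ x ∈ K, G n x = ⨆ x ∈ K, ⨅ n, G n x := by
  refine le_antisymm ?_ (le_iInf fun n => iSup₂_mono fun x _ => iInf_le _ n)
  rcases K.eq_empty_or_nonempty with rfl | hK_ne
  · simp
  set c := ⨅ n, ⨆ x ∈ K, G n x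
  -- Each finite subfamily of the closed sets `{c ≤ G n}` meets `K` at a maximiser of its last member.
  obtain ⟨x, hxK, hx⟩ : (K ∩ ⋂ n, G n ⁻¹' Ici c).Nonempty := by
    refine hK.inter_iInter_nonempty _ (fun n => (hG n).isClosed_preimage c) fun u => ?_
    obtain ⟨x, hxK, hx_max⟩ := ((hG (u.sup id)).upperSemicontinuousOn K).exists_isMaxOn hK_ne hK
    refine ⟨x, hxK, mem_iInter₂.2 fun n hn => ?_⟩
    calc c ≤ ⨆ y ∈ K, G (u.sup id) y := iInf_le _ _
      _ ≤ G (u.sup id) x := iSup₂_le fun y hy => hx_max hy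
      _ ≤ G n x := hG_anti (Finset.le_sup (f := id) hn) x
  exact le_iSup₂_of_le x hxK (le_iInf fun n => mem_iInter.1 hx n)

section ThickenedIndicator

variable {Ω : Type*} [PseudoEMetricSpace Ω]

theorem antitone_thickenedIndicator_one_div (F : Set Ω) :
    Antitone fun n : ℕ => ⇑(thickenedIndicator (Nat.one_div_pos_of_nat (n := n)) F) :=
  fun _ _ hmn => thickenedIndicator_mono _ _ (Nat.one_div_le_one_div hmn) F

theorem iInf_lintegral_thickenedIndicator_one_div [MeasurableSpace Ω] [OpensMeasurableSpace Ω]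
    (μ : Measure Ω) [IsFiniteMeasure μ] {F : Set Ω} (hF : IsClosed F) :
    ⨅ n : ℕ, ∫⁻ ω, thickenedIndicator (Nat.one_div_pos_of_nat (n := n)) F ω ∂μ = μ F := by
  refine tendsto_nhds_unique (tendsto_atTop_iInf fun m n hmn => ?_)
    (tendsto_lintegral_thickenedIndicator_of_isClosed μ hF _
      tendsto_one_div_add_atTop_nhds_zero_nat)
  exact lintegral_mono fun ω => ENNReal.coe_le_coe.2 (antitone_thickenedIndicator_one_div F hmn ω)

end ThickenedIndicator

namespace MeasureTheory.ProbabilityMeasure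

variable {Ω : Type*} [MeasurableSpace Ω]

noncomputable def upperCapacity (S : Set (ProbabilityMeasure Ω)) (A : Set Ω) : ℝ≥0∞ :=
  ⨆ P ∈ S, (P : Measure Ω) A

theorem upperCapacity_mono {S T : Set (ProbabilityMeasure Ω)} (hST : S ⊆ T) (A : Set Ω) :
    upperCapacity S A ≤ upperCapacity T A :=
  biSup_mono hST

variable [TopologicalSpace Ω]

theorem upperCapacity_le_of_forall_isClosed [TopologicalSpace.PseudoMetrizableSpace Ω]
    [BorelSpace Ω] {S T : Set (ProbabilityMeasure Ω)}
    (h : ∀ F, IsClosed F → upperCapacity S F ≤ upperCapacity T F)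
    {A : Set Ω} (hA : MeasurableSet A) :
    upperCapacity S A ≤ upperCapacity T A := by
  refine iSup₂_le fun P hP => ?_
  rw [hA.measure_eq_iSup_isClosed_of_ne_top (measure_ne_top (P : Measure Ω) A)]
  refine iSup₂_le fun F hFA => iSup_le fun hF => ?_
  calc (P : Measure Ω) F
      ≤ upperCapacity S F := le_iSup₂ (f := fun Q (_ : Q ∈ S) => (Q : Measure Ω) F) P hP
    _ ≤ upperCapacity T F := h F hF
    _ ≤ upperCapacity T A := iSup₂_mono fun Q _ => measure_mono hFA

theorem biSup_lintegral_ne_top (S : Set (ProbabilityMeasure Ω)) (f : Ω →ᵇ ℝ≥0) :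
    ⨆ P ∈ S, ∫⁻ ω, f ω ∂(P : Measure Ω) ≠ ∞ :=
  ne_top_of_le_ne_top (edist_ne_top 0 f) <| iSup₂_le fun P _ => by
    simpa using f.lintegral_le_edist_mul (P : Measure Ω)

variable [OpensMeasurableSpace Ω]

theorem toReal_biSup_lintegral (S : Set (ProbabilityMeasure Ω)) (f : Ω →ᵇ ℝ≥0) :
    (⨆ P ∈ S, ∫⁻ ω, f ω ∂(P : Measure Ω)).toReal = ⨆ P : S, ∫ ω, (f ω : ℝ) ∂(P : Measure Ω) := by
  rw [iSup_subtype', ENNReal.toReal_iSup fun P => (f.lintegral_lt_top_of_nnreal _).ne]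
  simp only [BoundedContinuousFunction.toReal_lintegral_coe_eq_integral]

theorem biSup_lintegral_eq_of_iSup_integral_eq {S T : Set (ProbabilityMeasure Ω)} (f : Ω →ᵇ ℝ≥0)
    (h : ⨆ P : S, ∫ ω, (f ω : ℝ) ∂(P : Measure Ω) = ⨆ P : T, ∫ ω, (f ω : ℝ) ∂(P : Measure Ω)) :
    ⨆ P ∈ S, ∫⁻ ω, f ω ∂(P : Measure Ω) = ⨆ P ∈ T, ∫⁻ ω, f ω ∂(P : Measure Ω) := by
  rwa [← ENNReal.toReal_eq_toReal_iff' (biSup_lintegral_ne_top S f) (biSup_lintegral_ne_top T f),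
    toReal_biSup_lintegral, toReal_biSup_lintegral]

theorem upperCapacity_le_of_isClosed [TopologicalSpace.PseudoMetrizableSpace Ω]
    {S T : Set (ProbabilityMeasure Ω)} (hT : IsCompact T)
    (h : ∀ f : Ω →ᵇ ℝ≥0,
      ⨆ P ∈ S, ∫⁻ ω, f ω ∂(P : Measure Ω) ≤ ⨆ P ∈ T, ∫⁻ ω, f ω ∂(P : Measure Ω))
    {F : Set Ω} (hF : IsClosed F) :
    upperCapacity S F ≤ upperCapacity T F := by
  let := TopologicalSpace.pseudoMetrizableSpacePseudoMetric Ω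
  set G : ℕ → ProbabilityMeasure Ω → ℝ≥0∞ := fun n P =>
    ∫⁻ ω, thickenedIndicator (Nat.one_div_pos_of_nat (n := n)) F ω ∂(P : Measure Ω)
  have hG_lim (P : ProbabilityMeasure Ω) : ⨅ n, G n P = (P : Measure Ω) F :=
    iInf_lintegral_thickenedIndicator_one_div _ hF
  have hG_anti : Antitone G := fun m n hmn P =>
    lintegral_mono fun ω => ENNReal.coe_le_coe.2 (antitone_thickenedIndicator_one_div F hmn ω)
  have hG_usc (n : ℕ) : UpperSemicontinuous (G n) :=
    (continuous_lintegral_boundedContinuousFunction _).upperSemicontinuous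
  calc upperCapacity S F = ⨆ P ∈ S, ⨅ n, G n P := by simp only [hG_lim, upperCapacity]
    _ ≤ ⨅ n, ⨆ P ∈ S, G n P := le_iInf fun n => iSup₂_mono fun P _ => iInf_le _ n
    _ ≤ ⨅ n, ⨆ P ∈ T, G n P := iInf_mono fun n => h _
    _ = ⨆ P ∈ T, ⨅ n, G n P := hT.iInf_iSup_eq_iSup_iInf_of_antitone hG_usc hG_anti
    _ = upperCapacity T F := by simp only [hG_lim, upperCapacity]

end MeasureTheory.ProbabilityMeasure

theorem upperCapacity_eq_of_upperExpectation_eq_on_boundedContinuous_general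
    {Ω : Type*} [TopologicalSpace Ω] [PolishSpace Ω] [MeasurableSpace Ω] [BorelSpace Ω]
    (Ps Ps' : Set (ProbabilityMeasure Ω)) (hcompact : IsCompact Ps)
    (hsub : Ps ⊆ Ps')
    (heq : ∀ f : Ω → ℝ, Continuous f → (∃ C : ℝ, ∀ ω, |f ω| ≤ C) →
      (⨆ P : Ps', ∫ ω, f ω ∂((P : ProbabilityMeasure Ω) : Measure Ω))
        = ⨆ P : Ps, ∫ ω, f ω ∂((P : ProbabilityMeasure Ω) : Measure Ω)) :
    ∀ A : Set Ω, MeasurableSet A →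
      (⨆ P ∈ Ps', (P : Measure Ω) A) = ⨆ P ∈ Ps, (P : Measure Ω) A := by
  have h_lintegral (f : Ω →ᵇ ℝ≥0) :
      ⨆ P ∈ Ps', ∫⁻ ω, f ω ∂(P : Measure Ω) ≤ ⨆ P ∈ Ps, ∫⁻ ω, f ω ∂(P : Measure Ω) :=
    (ProbabilityMeasure.biSup_lintegral_eq_of_iSup_integral_eq f <| heq _ (by fun_prop)
      ⟨_, fun ω => (abs_of_nonneg (f ω).2).trans_le (f.apply_le_nndist_zero ω)⟩).le
  intro A hA
  exact le_antisymm
    (ProbabilityMeasure.upperCapacity_le_of_forall_isClosed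
      (fun F hF => ProbabilityMeasure.upperCapacity_le_of_isClosed hcompact h_lintegral hF) hA)
    (ProbabilityMeasure.upperCapacity_mono hsub A)

/-- If `Ps ⊆ Ps'` and the two families have the same upper expectation on all
bounded continuous functions, then their capacities coincide on all Borel
sets. -/
theorem upperCapacity_eq_of_upperExpectation_eq_on_boundedContinuous
    {Ω : Type*} [TopologicalSpace Ω] [PolishSpace Ω] [MeasurableSpace Ω] [BorelSpace Ω]
    (Ps Ps' : Set (ProbabilityMeasure Ω)) (hne : Ps.Nonempty) (hcompact : IsCompact Ps)
    (hsub : Ps ⊆ Ps')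
    (heq : ∀ f : Ω → ℝ, Continuous f → (∃ C : ℝ, ∀ ω, |f ω| ≤ C) →
      (⨆ P : Ps', ∫ ω, f ω ∂((P : ProbabilityMeasure Ω) : Measure Ω))
        = ⨆ P : Ps, ∫ ω, f ω ∂((P : ProbabilityMeasure Ω) : Measure Ω)) :
    ∀ A : Set Ω, MeasurableSet A →
      (⨆ P ∈ Ps', (P : Measure Ω) A) = ⨆ P ∈ Ps, (P : Measure Ω) A :=
  upperCapacity_eq_of_upperExpectation_eq_on_boundedContinuous_general Ps Ps' hcompact hsub heq
end

section
/- Let 𝒫₁ and 𝒫₂ be two nonempty compact sets of Borel probability measures on Ω such that sup_{P ∈ 𝒫₁} ∫ f dP = sup_{P ∈ 𝒫₂} ∫ f dP for every bounded continuous function f : Ω → ℝ. Then sup_{P ∈ 𝒫₁} P(A) = sup_{P ∈ 𝒫₂} P(A) for every Borel set A ⊆ Ω. -/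
open MeasureTheory Filter Topology Set
open scoped ENNReal NNReal BoundedContinuousFunction

/-! The upper capacity of a closed set `F` is determined by upper expectations of bounded
continuous functions: for a decreasing sequence of thickened indicators `fₙ ↓ 𝟙_F`, the maps
`P ↦ ∫ fₙ dP` are continuous and decrease to `P ↦ P F`, so on a compact family of measures the
supremum commutes with the limit in `n` (a Dini-type argument via Cantor's intersection theorem).
Inner regularity of probability measures on a metrizable space then passes from closed sets to
all Borel sets. -/

theorem IsCompact.iInf_iSup_eq_iSup_iInf_of_directed {X α ι : Type*} [TopologicalSpace X]
    [CompleteLinearOrder α] [DenselyOrdered α] [Nonempty ι] {K : Set X} (hK : IsCompact K)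
    {g : ι → X → α} (hdir : Directed (· ≥ ·) g) (hg : ∀ i, UpperSemicontinuous (g i)) :
    ⨅ i, ⨆ x ∈ K, g i x = ⨆ x ∈ K, ⨅ i, g i x := by
  refine le_antisymm (le_of_forall_lt_imp_le_of_dense fun c hc => ?_)
    (iSup₂_le fun x hx => iInf_mono fun i => le_biSup (g i) hx)
  have hmeets : ∀ i, (K ∩ g i ⁻¹' Ici c).Nonempty := fun i => by
    obtain ⟨x, hxK, hx⟩ := lt_biSup_iff.1 (hc.trans_le (iInf_le _ i))
    exact ⟨x, hxK, hx.le⟩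
  obtain ⟨x, hxK, hx⟩ : (K ∩ ⋂ i, g i ⁻¹' Ici c).Nonempty := by
    refine nonempty_iff_ne_empty.2 fun hempty => ?_
    obtain ⟨i, hi⟩ := hK.elim_directed_family_closed _ (fun i => (hg i).isClosed_preimage c)
      hempty (Directed.mono_comp (· ≥ ·) (g := fun h : X → α => h ⁻¹' Ici c)
        (fun _ _ hle _ hx => le_trans hx (hle _)) hdir)
    exact (hmeets i).ne_empty hi
  exact le_iSup₂_of_le x hxK (le_iInf fun i => mem_iInter.1 hx i)

section ThickenedIndicator

variable {Ω : Type*} [PseudoEMetricSpace Ω] [MeasurableSpace Ω]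
  {F : Set Ω} {δ : ℕ → ℝ} (δ_pos : ∀ n, 0 < δ n)

theorem antitone_lintegral_thickenedIndicator (hδ : Antitone δ) (μ : Measure Ω) :
    Antitone fun n => ∫⁻ ω, thickenedIndicator (δ_pos n) F ω ∂μ :=
  fun _ _ hmn => lintegral_mono fun ω =>
    ENNReal.coe_le_coe.2 (thickenedIndicator_mono _ _ (hδ hmn) F ω)

variable [OpensMeasurableSpace Ω]

theorem iInf_lintegral_thickenedIndicator (hF : IsClosed F) (hδ : Antitone δ)
    (δ_lim : Tendsto δ atTop (𝓝 0)) (μ : Measure Ω) [IsFiniteMeasure μ] :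
    ⨅ n, ∫⁻ ω, thickenedIndicator (δ_pos n) F ω ∂μ = μ F :=
  tendsto_nhds_unique (tendsto_atTop_iInf (antitone_lintegral_thickenedIndicator δ_pos hδ μ))
    (tendsto_lintegral_thickenedIndicator_of_isClosed μ hF δ_pos δ_lim)

theorem IsCompact.iSup_measure_eq_iInf_iSup_lintegral_thickenedIndicator
    {Ps : Set (ProbabilityMeasure Ω)} (hPs : IsCompact Ps) (hF : IsClosed F) (hδ : Antitone δ)
    (δ_lim : Tendsto δ atTop (𝓝 0)) :
    ⨆ P ∈ Ps, (P : Measure Ω) F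
      = ⨅ n, ⨆ P ∈ Ps, ∫⁻ ω, thickenedIndicator (δ_pos n) F ω ∂(P : Measure Ω) := by
  have hanti : Antitone fun n (P : ProbabilityMeasure Ω) =>
      ∫⁻ ω, thickenedIndicator (δ_pos n) F ω ∂(P : Measure Ω) :=
    fun _ _ hmn P => antitone_lintegral_thickenedIndicator δ_pos hδ _ hmn
  rw [hPs.iInf_iSup_eq_iSup_iInf_of_directed hanti.directed_ge fun n =>
    (ProbabilityMeasure.continuous_lintegral_boundedContinuousFunction _).upperSemicontinuous]
  simp only [iInf_lintegral_thickenedIndicator δ_pos hF hδ δ_lim]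

end ThickenedIndicator

section UpperExpectation

variable {Ω : Type*} [TopologicalSpace Ω] [MeasurableSpace Ω]

theorem iSup_lintegral_ne_top (Ps : Set (ProbabilityMeasure Ω)) (f : Ω →ᵇ ℝ≥0) :
    ⨆ P ∈ Ps, ∫⁻ ω, f ω ∂(P : Measure Ω) ≠ ∞ :=
  ne_top_of_le_ne_top (edist_ne_top 0 f) <| iSup₂_le fun P _ =>
    (f.lintegral_le_edist_mul P).trans_eq (by simp)

variable [OpensMeasurableSpace Ω]

theorem toReal_iSup_lintegral (Ps : Set (ProbabilityMeasure Ω)) (f : Ω →ᵇ ℝ≥0) :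
    (⨆ P ∈ Ps, ∫⁻ ω, f ω ∂(P : Measure Ω)).toReal
      = ⨆ P : Ps, ∫ ω, (f ω : ℝ) ∂((P : ProbabilityMeasure Ω) : Measure Ω) := by
  rw [iSup_subtype', ENNReal.toReal_iSup fun P => (f.lintegral_lt_top_of_nnreal _).ne]
  exact iSup_congr fun P => f.toReal_lintegral_coe_eq_integral _

theorem iSup_lintegral_eq_of_iSup_integral_eq {Ps Qs : Set (ProbabilityMeasure Ω)}
    (f : Ω →ᵇ ℝ≥0)
    (h : ⨆ P : Ps, ∫ ω, (f ω : ℝ) ∂((P : ProbabilityMeasure Ω) : Measure Ω)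
      = ⨆ Q : Qs, ∫ ω, (f ω : ℝ) ∂((Q : ProbabilityMeasure Ω) : Measure Ω)) :
    ⨆ P ∈ Ps, ∫⁻ ω, f ω ∂(P : Measure Ω) = ⨆ Q ∈ Qs, ∫⁻ ω, f ω ∂(Q : Measure Ω) := by
  rwa [← ENNReal.toReal_eq_toReal_iff' (iSup_lintegral_ne_top Ps f) (iSup_lintegral_ne_top Qs f),
    toReal_iSup_lintegral, toReal_iSup_lintegral]

end UpperExpectation

theorem iSup_measure_le_of_forall_isClosed {Ω : Type*} [TopologicalSpace Ω]
    [TopologicalSpace.PseudoMetrizableSpace Ω] [MeasurableSpace Ω] [BorelSpace Ω]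
    {Ps Qs : Set (ProbabilityMeasure Ω)}
    (h : ∀ F, IsClosed F → ⨆ P ∈ Ps, (P : Measure Ω) F ≤ ⨆ Q ∈ Qs, (Q : Measure Ω) F)
    {A : Set Ω} (hA : MeasurableSet A) :
    ⨆ P ∈ Ps, (P : Measure Ω) A ≤ ⨆ Q ∈ Qs, (Q : Measure Ω) A := by
  refine iSup₂_le fun P hP => ?_
  rw [hA.measure_eq_iSup_isClosed_of_ne_top (measure_ne_top _ A)]
  refine iSup₂_le fun F hFA => iSup_le fun hF => ?_
  calc (P : Measure Ω) F ≤ ⨆ P ∈ Ps, (P : Measure Ω) F :=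
        le_biSup (fun P : ProbabilityMeasure Ω => (P : Measure Ω) F) hP
    _ ≤ ⨆ Q ∈ Qs, (Q : Measure Ω) F := h F hF
    _ ≤ ⨆ Q ∈ Qs, (Q : Measure Ω) A := iSup₂_mono fun Q _ => measure_mono hFA

theorem upperCapacity_eq_of_two_compact_representations_general
    {Ω : Type*} [TopologicalSpace Ω] [PolishSpace Ω] [MeasurableSpace Ω] [BorelSpace Ω]
    (Ps₁ Ps₂ : Set (ProbabilityMeasure Ω))
    (hcompact₁ : IsCompact Ps₁)
    (hcompact₂ : IsCompact Ps₂)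
    (heq : ∀ f : Ω → ℝ, Continuous f → (∃ C : ℝ, ∀ ω, |f ω| ≤ C) →
      (⨆ P : Ps₁, ∫ ω, f ω ∂((P : ProbabilityMeasure Ω) : Measure Ω))
        = ⨆ P : Ps₂, ∫ ω, f ω ∂((P : ProbabilityMeasure Ω) : Measure Ω)) :
    ∀ A : Set Ω, MeasurableSet A →
      (⨆ P ∈ Ps₁, (P : Measure Ω) A) = ⨆ P ∈ Ps₂, (P : Measure Ω) A := by
  intro A hA
  let := TopologicalSpace.pseudoMetrizableSpacePseudoMetric Ω
  obtain ⟨δ, hδ_anti, δ_pos, δ_lim⟩ := exists_seq_strictAnti_tendsto (0 : ℝ)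
  have hclosed : ∀ F, IsClosed F →
      ⨆ P ∈ Ps₁, (P : Measure Ω) F = ⨆ P ∈ Ps₂, (P : Measure Ω) F := by
    intro F hF
    rw [hcompact₁.iSup_measure_eq_iInf_iSup_lintegral_thickenedIndicator δ_pos hF
      hδ_anti.antitone δ_lim, hcompact₂.iSup_measure_eq_iInf_iSup_lintegral_thickenedIndicator
      δ_pos hF hδ_anti.antitone δ_lim]
    refine iInf_congr fun n => iSup_lintegral_eq_of_iSup_integral_eq _ <|
      heq _ (by fun_prop) ⟨1, fun ω => ?_⟩
    rw [NNReal.abs_eq]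
    exact_mod_cast thickenedIndicator_le_one (δ_pos n) F ω
  exact le_antisymm (iSup_measure_le_of_forall_isClosed (fun F hF => (hclosed F hF).le) hA)
    (iSup_measure_le_of_forall_isClosed (fun F hF => (hclosed F hF).ge) hA)

/-- Two nonempty weakly compact sets of Borel probability measures on a Polish
space with the same upper expectation on all bounded continuous functions have
the same capacity on all Borel sets. -/
theorem upperCapacity_eq_of_two_compact_representations
    {Ω : Type*} [TopologicalSpace Ω] [PolishSpace Ω] [MeasurableSpace Ω] [BorelSpace Ω]
    (Ps₁ Ps₂ : Set (ProbabilityMeasure Ω))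
    (hne₁ : Ps₁.Nonempty) (hcompact₁ : IsCompact Ps₁)
    (hne₂ : Ps₂.Nonempty) (hcompact₂ : IsCompact Ps₂)
    (heq : ∀ f : Ω → ℝ, Continuous f → (∃ C : ℝ, ∀ ω, |f ω| ≤ C) →
      (⨆ P : Ps₁, ∫ ω, f ω ∂((P : ProbabilityMeasure Ω) : Measure Ω))
        = ⨆ P : Ps₂, ∫ ω, f ω ∂((P : ProbabilityMeasure Ω) : Measure Ω)) :
    ∀ A : Set Ω, MeasurableSet A →
      (⨆ P ∈ Ps₁, (P : Measure Ω) A) = ⨆ P ∈ Ps₂, (P : Measure Ω) A :=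
  upperCapacity_eq_of_two_compact_representations_general Ps₁ Ps₂ hcompact₁ hcompact₂ heq
end

section
/- For every closed set F ⊆ Ω, c(F) = inf { sup_{P ∈ 𝒫} ∫ f dP : f : Ω → ℝ continuous with 1_F ≤ f ≤ 1 }, where 1_F is the indicator function of F. -/
open MeasureTheory Filter Topology Set
open scoped NNReal BoundedContinuousFunction

/-!
The inequality `c(F) ≤ sup_P ∫ f dP` holds for every admissible `f` simply because `1_F ≤ f`.
For the converse, approximate `1_F` from above by the thickened indicators `f_n` of `F` with
radius `1 / (n + 1)`. The maps `P ↦ ∫ f_n dP` are weakly continuous, decrease in `n` and converge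
pointwise to `P ↦ P(F)` by dominated convergence. Given `c > c(F)`, the open sets
`{P | ∫ f_n dP < c}` therefore form an increasing cover of the compact set `𝒫`, so one of them
contains `𝒫` (a Dini-type argument), and `sup_P ∫ f_n dP ≤ c` for that `n`.
-/

theorem IsCompact.exists_forall_lt_of_antitone {X ι β : Type*} [TopologicalSpace X] [Preorder ι]
    [IsDirectedOrder ι] [Nonempty ι] [Preorder β] {K : Set X} (hK : IsCompact K)
    {G : ι → X → β} (hG : ∀ i, UpperSemicontinuous (G i)) (hanti : Antitone G) {c : β}
    (hc : ∀ x ∈ K, ∃ i, G i x < c) : ∃ i, ∀ x ∈ K, G i x < c :=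
  hK.elim_directed_cover (fun i ↦ G i ⁻¹' Iio c) (fun i ↦ (hG i).isOpen_preimage c)
    (fun x hx ↦ mem_iUnion.2 (hc x hx))
    (directed_of_isDirected_le fun _ _ hij _ hx ↦ (hanti hij _).trans_lt hx)

section LowerBound

variable {Ω : Type*} [MeasurableSpace Ω]

theorem measureReal_le_integral_of_indicator_le {μ : Measure Ω} [IsFiniteMeasure μ] {F : Set Ω}
    (hF : MeasurableSet F) {f : Ω → ℝ} (hf : Integrable f μ)
    (hFf : ∀ ω, F.indicator (fun _ ↦ (1 : ℝ)) ω ≤ f ω) : μ.real F ≤ ∫ ω, f ω ∂μ := by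
  rw [← integral_indicator_one hF]
  exact integral_mono ((integrable_const 1).indicator hF) hf hFf

theorem iSup_measureReal_le_iSup_integral (Ps : Set (ProbabilityMeasure Ω)) {F : Set Ω}
    (hF : MeasurableSet F) {f : Ω → ℝ} (hf : Measurable f)
    (hFf : ∀ ω, F.indicator (fun _ ↦ (1 : ℝ)) ω ≤ f ω) (hf1 : ∀ ω, f ω ≤ 1) :
    ⨆ P : Ps, ((P : Measure Ω) F).toReal ≤ ⨆ P : Ps, ∫ ω, f ω ∂(P : Measure Ω) := by
  have hf0 (ω : Ω) : 0 ≤ f ω := (indicator_nonneg (fun _ _ ↦ zero_le_one) ω).trans (hFf ω)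
  have hint (P : ProbabilityMeasure Ω) : Integrable f P :=
    .of_bound hf.aestronglyMeasurable 1 <| ae_of_all _ fun ω ↦ by
      rw [Real.norm_of_nonneg (hf0 ω)]; exact hf1 ω
  refine ciSup_mono ⟨1, ?_⟩ fun P ↦ measureReal_le_integral_of_indicator_le hF (hint P) hFf
  rintro _ ⟨P, rfl⟩
  exact (integral_mono (hint P) (integrable_const 1) hf1).trans_eq (by simp)

end LowerBound

section UpperBound

variable {Ω : Type*} [MeasurableSpace Ω]

theorem MeasureTheory.ProbabilityMeasure.continuous_integral_coe_nnreal [TopologicalSpace Ω]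
    [OpensMeasurableSpace Ω] (f : Ω →ᵇ ℝ≥0) :
    Continuous fun P : ProbabilityMeasure Ω ↦ ∫ ω, (f ω : ℝ) ∂(P : Measure Ω) :=
  ProbabilityMeasure.continuous_integral_boundedContinuousFunction
    (f.comp _ isometry_subtype_coe.lipschitz)

variable [PseudoEMetricSpace Ω] [OpensMeasurableSpace Ω]

theorem antitone_integral_thickenedIndicator (μ : Measure Ω) [IsFiniteMeasure μ] (F : Set Ω) :
    Antitone fun n : ℕ ↦
      ∫ ω, (thickenedIndicator (Nat.one_div_pos_of_nat (n := n)) F ω : ℝ) ∂μ :=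
  fun _ _ hmn ↦ integral_mono (integrable_thickenedIndicator F _)
    (integrable_thickenedIndicator F _) fun ω ↦ by
      exact_mod_cast thickenedIndicator_mono Nat.one_div_pos_of_nat Nat.one_div_pos_of_nat
        (Nat.one_div_le_one_div hmn) F ω

theorem IsCompact.exists_iSup_integral_thickenedIndicator_le {Ps : Set (ProbabilityMeasure Ω)}
    (hPs : IsCompact Ps) {F : Set Ω} (hF : IsClosed F) {c : ℝ}
    (hc : ⨆ P : Ps, ((P : Measure Ω) F).toReal < c) :
    ∃ n : ℕ, ⨆ P : Ps,
      ∫ ω, (thickenedIndicator (Nat.one_div_pos_of_nat (n := n)) F ω : ℝ) ∂(P : Measure Ω) ≤ c := by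
  have hbdd : BddAbove (range fun P : Ps ↦ ((P : Measure Ω) F).toReal) :=
    ⟨1, by rintro _ ⟨P, rfl⟩; exact measureReal_le_one⟩
  have hlim (P : ProbabilityMeasure Ω) :
      Tendsto (fun n : ℕ ↦ ∫ ω, (thickenedIndicator (Nat.one_div_pos_of_nat (n := n)) F ω : ℝ)
        ∂(P : Measure Ω)) atTop (𝓝 ((P : Measure Ω) F).toReal) :=
    tendsto_integral_thickenedIndicator_of_isClosed P hF _ tendsto_one_div_add_atTop_nhds_zero_nat
  obtain ⟨n, hn⟩ := hPs.exists_forall_lt_of_antitone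
    (fun n ↦ (ProbabilityMeasure.continuous_integral_coe_nnreal _).upperSemicontinuous)
    (fun _ _ hmn P ↦ antitone_integral_thickenedIndicator P F hmn)
    fun P hP ↦ ((hlim P).eventually (gt_mem_nhds ((le_ciSup hbdd ⟨P, hP⟩).trans_lt hc))).exists
  refine ⟨n, Real.iSup_le (fun P ↦ (hn P P.2).le) ?_⟩
  exact (Real.iSup_nonneg fun _ ↦ ENNReal.toReal_nonneg).trans hc.le

end UpperBound

theorem upperCapacity_closed_eq_iInf_continuous_general
    {Ω : Type*} [TopologicalSpace Ω] [PolishSpace Ω] [MeasurableSpace Ω] [BorelSpace Ω]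
    (Ps : Set (ProbabilityMeasure Ω)) (hcompact : IsCompact Ps)
    (F : Set Ω) (hF : IsClosed F) :
    (⨆ P : Ps, (((P : ProbabilityMeasure Ω) : Measure Ω) F).toReal)
      = sInf { x : ℝ | ∃ f : Ω → ℝ, Continuous f ∧
          (∀ ω, F.indicator (fun _ => (1 : ℝ)) ω ≤ f ω) ∧ (∀ ω, f ω ≤ 1) ∧
          x = ⨆ P : Ps, ∫ ω, f ω ∂((P : ProbabilityMeasure Ω) : Measure Ω) } := by
  let := TopologicalSpace.pseudoMetrizableSpacePseudoMetric Ω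
  refine (csInf_eq_of_forall_ge_of_forall_gt_exists_lt ?_ ?_ ?_).symm
  · exact ⟨_, fun _ ↦ 1, continuous_const, indicator_le_self' fun _ _ ↦ zero_le_one,
      fun _ ↦ le_rfl, rfl⟩
  · rintro _ ⟨f, hf, hFf, hf1, rfl⟩
    exact iSup_measureReal_le_iSup_integral Ps hF.measurableSet hf.measurable hFf hf1
  · intro w hw
    obtain ⟨c, hc, hcw⟩ := exists_between hw
    obtain ⟨n, hn⟩ := hcompact.exists_iSup_integral_thickenedIndicator_le hF hc
    refine ⟨_, ⟨_, by fun_prop, fun ω ↦ ?_, fun ω ↦ ?_, rfl⟩, hn.trans_lt hcw⟩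
    · exact (NNReal.coe_indicator F (fun _ ↦ 1) ω).symm.trans_le
        (NNReal.coe_le_coe.2 (indicator_le_thickenedIndicator _ F ω))
    · exact_mod_cast thickenedIndicator_le_one _ F ω

/-- For a nonempty weakly compact set of Borel probability measures on a
Polish space, the capacity of a closed set `F` equals the infimum of the upper
expectations of continuous functions `f` with `1_F ≤ f ≤ 1`. -/
theorem upperCapacity_closed_eq_iInf_continuous
    {Ω : Type*} [TopologicalSpace Ω] [PolishSpace Ω] [MeasurableSpace Ω] [BorelSpace Ω]
    (Ps : Set (ProbabilityMeasure Ω)) (hne : Ps.Nonempty) (hcompact : IsCompact Ps)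
    (F : Set Ω) (hF : IsClosed F) :
    (⨆ P : Ps, (((P : ProbabilityMeasure Ω) : Measure Ω) F).toReal)
      = sInf { x : ℝ | ∃ f : Ω → ℝ, Continuous f ∧
          (∀ ω, F.indicator (fun _ => (1 : ℝ)) ω ≤ f ω) ∧ (∀ ω, f ω ≤ 1) ∧
          x = ⨆ P : Ps, ∫ ω, f ω ∂((P : ProbabilityMeasure Ω) : Measure Ω) } :=
  upperCapacity_closed_eq_iInf_continuous_general Ps hcompact F hF
end
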